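/- arXiv:2004.11599 — 4 statements merged into one kernel-verified Lean document; each statement's English description precedes it below -/
import Mathlib

section
/- Let h₁,…,h_r be analytic vector fields on a nonempty open connected set U* ⊆ ℂⁿ. Then h₁,…,h_r are linearly dependent over the field 𝕃 of meromorphic functions on U* if and only if for every point y ∈ U* the vectors h₁(y),…,h_r(y) ∈ ℂⁿ are linearly dependent over ℂ. -/
/-!
Both directions rest on McCoy's criterion: the rows of an `r × ι` matrix over a nontrivial
commutative ring are linearly dependent iff all its `r × r` minors vanish. For the nontrivial
implication, take a nonvanishing minor of maximal size `k < r`, add one further row `i₀`, and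
expand the `(k + 1)`-minors along an arbitrary further column: the cofactors form a relation
whose coefficient at `i₀` is the chosen minor.

Dependence of `h₁(y), …, h_r(y)` thus means that the maximal minors of `(h_i(y))` vanish. These
minors are analytic; for a meromorphic relation they vanish on a dense part of a nonempty open
set, hence on the connected set `U`. Conversely, applying the criterion over the ring of analytic
functions on `U` (restricted to `U`) gives analytic, hence meromorphic, coefficients, one of which
is a minor not vanishing identically.
-/

open Finset

/-- Analytic vector fields: maps `ℂⁿ → ℂⁿ`. -/
abbrev VFa (n : ℕ) := (Fin n → ℂ) → (Fin n → ℂ)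

/-- Lie bracket `[g,h](x) = Dh(x)g(x) − Dg(x)h(x)`. -/
noncomputable def abr {n : ℕ} (g h : VFa n) : VFa n :=
  fun x => fderiv ℂ h x (g x) - fderiv ℂ g x (h x)

/-- `μ` is meromorphic on `U`: locally on `U` it is expressible as a quotient
of analytic functions (on the complement of the zero set of the denominator). -/
def MeromOnC {n : ℕ} (U : Set (Fin n → ℂ)) (μ : (Fin n → ℂ) → ℂ) : Prop :=
  ∀ y ∈ U, ∃ V : Set (Fin n → ℂ), IsOpen V ∧ y ∈ V ∧ V ⊆ U ∧
    ∃ a b : (Fin n → ℂ) → ℂ, AnalyticOnNhd ℂ a V ∧ AnalyticOnNhd ℂ b V ∧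
      (∃ z ∈ V, b z ≠ 0) ∧ ∀ z ∈ V, b z ≠ 0 → μ z = a z / b z

/-- `μ` is a nonzero element of the field of meromorphic functions on `U`:
it is nonvanishing on some nonempty open subset of `U`. -/
def MeromNonzero {n : ℕ} (U : Set (Fin n → ℂ)) (μ : (Fin n → ℂ) → ℂ) : Prop :=
  ∃ W : Set (Fin n → ℂ), IsOpen W ∧ W.Nonempty ∧ W ⊆ U ∧ ∀ z ∈ W, μ z ≠ 0

/-- `D` is a dense subset of `U`. -/
def DenseIn {n : ℕ} (U D : Set (Fin n → ℂ)) : Prop :=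
  D ⊆ U ∧ U ⊆ closure D

/-- The vector fields `h₁,…,h_r` are linearly dependent over the field `𝕃` of
meromorphic functions on `U`: there are meromorphic coefficients `μ_i`, not all
zero in `𝕃`, with `Σ μ_i h_i = 0` (as meromorphic vector fields, i.e. on a
dense subset of `U`). -/
def LinDepMerom {n r : ℕ} (U : Set (Fin n → ℂ)) (h : Fin r → VFa n) : Prop :=
  ∃ μ : Fin r → ((Fin n → ℂ) → ℂ),
    (∀ i, MeromOnC U (μ i)) ∧
    (∃ i, MeromNonzero U (μ i)) ∧
    ∃ D : Set (Fin n → ℂ), DenseIn U D ∧ ∀ z ∈ D, (∑ i, μ i z • h i z) = 0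

namespace Matrix

variable {R ι : Type*} [CommRing R]

def signedMinors {k : ℕ} (M : Matrix (Fin (k + 1)) ι R) (φ : Fin k → ι) : Fin (k + 1) → R :=
  fun b => (-1) ^ (b + k : ℕ) * (M.submatrix b.succAbove φ).det

theorem vecMul_signedMinors_apply {k : ℕ} (M : Matrix (Fin (k + 1)) ι R) (φ : Fin k → ι)
    (m : ι) :
    (signedMinors M φ ᵥ* M) m = (M.submatrix id (Fin.snoc φ m : Fin (k + 1) → ι)).det := by
  have hminor (b : Fin (k + 1)) : (M.submatrix id (Fin.snoc φ m : Fin (k + 1) → ι)).submatrix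
      b.succAbove (Fin.last k).succAbove = M.submatrix b.succAbove φ := by
    ext; simp
  rw [det_succ_column _ (Fin.last k)]
  simp only [vecMul, dotProduct, signedMinors, hminor, submatrix_apply, id, Fin.snoc_last,
    Fin.val_last]
  exact Finset.sum_congr rfl fun b _ => by ring

theorem signedMinors_last {k : ℕ} (M : Matrix (Fin (k + 1)) ι R) (φ : Fin k → ι) :
    signedMinors M φ (Fin.last k) = (M.submatrix Fin.castSucc φ).det := by
  simp [signedMinors, Fin.succAbove_last, ← two_mul, pow_mul]

theorem vecMul_sum_fiberwise {κ α : Type*} [Fintype κ] [Fintype α] [DecidableEq κ]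
    (M : Matrix κ ι R) (σ : α → κ) (d : α → R) :
    (fun i => ∑ b with σ b = i, d b) ᵥ* M = d ᵥ* M.submatrix σ id := by
  ext m
  simp only [vecMul, dotProduct, submatrix_apply, id, Finset.sum_mul]
  rw [← Finset.sum_fiberwise Finset.univ σ (fun b => d b * M (σ b) m)]
  refine Finset.sum_congr rfl fun i _ => Finset.sum_congr rfl fun b hb => ?_
  rw [(Finset.mem_filter.mp hb).2]

theorem exists_vecMul_eq_zero_of_det_submatrix_eq_zero [Nontrivial R] {r : ℕ}
    (M : Matrix (Fin r) ι R)
    (hM : ∀ (σ : Fin r → Fin r) (φ : Fin r → ι), (M.submatrix σ φ).det = 0) :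
    ∃ c ≠ 0, c ᵥ* M = 0 := by
  classical
  let P : ℕ → Prop := fun k => ∃ (σ : Fin k → Fin r) (φ : Fin k → ι), (M.submatrix σ φ).det ≠ 0
  have hP0 : P 0 := ⟨Fin.elim0, Fin.elim0, by simp⟩
  have hPr : ¬ P r := fun ⟨σ, φ, hΔ⟩ => hΔ (hM σ φ)
  set k := Nat.findGreatest P r
  have hPk : P k := Nat.findGreatest_spec (Nat.zero_le r) hP0
  have hkr : k < r := (Nat.findGreatest_le r).lt_of_ne fun hk => hPr (hk ▸ hPk)
  have hmax : ¬ P (k + 1) := Nat.findGreatest_is_greatest (Nat.lt_succ_self k) hkr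
  obtain ⟨σ, φ, hΔ⟩ := hPk
  obtain ⟨i₀, hi₀⟩ : ∃ i₀, i₀ ∉ Set.range σ := by
    by_contra! hσ
    have := Fintype.card_le_of_surjective σ hσ
    simp only [Fintype.card_fin] at this
    omega
  let σ' : Fin (k + 1) → Fin r := Fin.snoc σ i₀
  have hfiber : ∀ b, σ' b = i₀ ↔ b = Fin.last k := by
    refine Fin.lastCases (by simp [σ']) fun b => ?_
    simp only [σ', Fin.snoc_castSucc, Fin.castSucc_ne_last, iff_false]
    exact fun h => hi₀ ⟨b, h⟩
  let d := signedMinors (M.submatrix σ' id) φ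
  refine ⟨fun i => ∑ b with σ' b = i, d b, fun h0 => hΔ ?_, ?_⟩
  · have := congrFun h0 i₀
    simp only [hfiber, Finset.filter_eq', Finset.mem_univ, if_true, Finset.sum_singleton,
      Pi.zero_apply, d, signedMinors_last] at this
    simpa [σ'] using this
  · rw [vecMul_sum_fiberwise]
    ext m
    rw [vecMul_signedMinors_apply]
    by_contra h
    exact hmax ⟨σ', Fin.snoc φ m, by simpa using h⟩

theorem det_submatrix_eq_zero_of_vecMul_eq_zero [IsDomain R] {r : ℕ} {M : Matrix (Fin r) ι R}
    {c : Fin r → R} (hc : c ≠ 0) (hcM : c ᵥ* M = 0) (σ : Fin r → Fin r) (φ : Fin r → ι) :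
    (M.submatrix σ φ).det = 0 := by
  classical
  by_cases hσ : Function.Injective σ
  · let e := Equiv.ofBijective σ (Finite.injective_iff_bijective.mp hσ)
    refine exists_vecMul_eq_zero_iff.mp ⟨c ∘ e, fun h0 => hc ?_, ?_⟩
    · funext i
      simpa using congrFun h0 (e.symm i)
    · change (c ∘ e) ᵥ* M.submatrix e φ = 0
      rw [submatrix_vecMul_equiv]
      simp [Function.comp_assoc, hcM]
  · obtain ⟨a, b, hab, hne⟩ := Function.not_injective_iff.mp hσ
    exact det_zero_of_row_eq hne (congrArg (fun i j => M i (φ j)) hab)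

theorem exists_vecMul_map_eq_zero_of_det_submatrix_map_eq_zero {S T : Type*} [CommRing S]
    [CommRing T] [Nontrivial T] (f : S →+* T) {r : ℕ} (M : Matrix (Fin r) ι S)
    (hM : ∀ (σ : Fin r → Fin r) (φ : Fin r → ι), f (M.submatrix σ φ).det = 0) :
    ∃ c : Fin r → S, f ∘ c ≠ 0 ∧ (f ∘ c) ᵥ* M.map f = 0 := by
  obtain ⟨c, hc, hcM⟩ := exists_vecMul_eq_zero_of_det_submatrix_eq_zero (M.map f.rangeRestrict)
    fun σ φ => by
      change (f.rangeRestrict.mapMatrix (M.submatrix σ φ)).det = 0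
      rw [← RingHom.map_det]
      exact Subtype.ext (hM σ φ)
  choose c' hc' using fun i => f.rangeRestrict_surjective (c i)
  have hfc' : f ∘ c' = fun i => (c i : T) := funext fun i => congrArg Subtype.val (hc' i)
  refine ⟨c', ?_, ?_⟩
  · rw [hfc']
    exact fun h0 => hc (funext fun i => Subtype.ext (congrFun h0 i))
  · rw [hfc']
    ext m
    simpa [vecMul, dotProduct] using congrArg Subtype.val (congrFun hcM m)

theorem exists_sum_smul_eq_zero_iff_forall_det_submatrix_eq_zero [IsDomain R] {r : ℕ}
    (v : Fin r → ι → R) :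
    (∃ c : Fin r → R, c ≠ 0 ∧ ∑ i, c i • v i = 0) ↔
      ∀ (σ : Fin r → Fin r) (φ : Fin r → ι), ((of v).submatrix σ φ).det = 0 := by
  have hsum (c : Fin r → R) : ∑ i, c i • v i = c ᵥ* of v := (vecMul_eq_sum c (of v)).symm
  simp only [hsum]
  exact ⟨fun ⟨_, hc, hcv⟩ => det_submatrix_eq_zero_of_vecMul_eq_zero hc hcv,
    exists_vecMul_eq_zero_of_det_submatrix_eq_zero (of v)⟩

end Matrix

section Analytic

variable {𝕜 E F : Type*} [NontriviallyNormedField 𝕜] [NormedAddCommGroup E] [NormedSpace 𝕜 E]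

variable (𝕜) in
def analyticOnNhdSubring (U : Set E) : Subring (E → 𝕜) where
  carrier := {f | AnalyticOnNhd 𝕜 f U}
  mul_mem' := AnalyticOnNhd.mul
  one_mem' := analyticOnNhd_const
  add_mem' := AnalyticOnNhd.add
  zero_mem' := analyticOnNhd_const
  neg_mem' := AnalyticOnNhd.neg

theorem Subring.coe_det_apply {X R m : Type*} [CommRing R] [Fintype m] [DecidableEq m]
    {S : Subring (X → R)} (A : Matrix m m S) (x : X) :
    (A.det : X → R) x = (A.map fun g => (g : X → R) x).det :=
  RingHom.map_det ((Pi.evalRingHom _ x).comp S.subtype) A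

theorem AnalyticOnNhd.det {m : Type*} [Fintype m] [DecidableEq m] {M : E → Matrix m m 𝕜}
    {U : Set E} (hM : ∀ i j, AnalyticOnNhd 𝕜 (fun z => M z i j) U) :
    AnalyticOnNhd 𝕜 (fun z => (M z).det) U := by
  let A : Matrix m m (analyticOnNhdSubring 𝕜 U) := Matrix.of fun i j => ⟨_, hM i j⟩
  have hA : (fun z => (M z).det) = (A.det : E → 𝕜) :=
    funext fun z => (Subring.coe_det_apply A z).symm
  exact hA ▸ A.det.2

theorem AnalyticOnNhd.eqOn_zero_of_eqOn_zero_inter_dense [NormedAddCommGroup F] [NormedSpace 𝕜 F]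
    {f : E → F} {U W D : Set E} (hf : AnalyticOnNhd 𝕜 f U) (hU : IsPreconnected U)
    (hW : IsOpen W) (hWne : W.Nonempty) (hWU : W ⊆ U) (hWD : W ⊆ closure D)
    (hfD : Set.EqOn f 0 (W ∩ D)) : Set.EqOn f 0 U := by
  have hfW : Set.EqOn f 0 W :=
    hfD.of_subset_closure (hf.continuousOn.mono hWU) continuousOn_const Set.inter_subset_left
      fun w hw => hW.inter_closure ⟨hw, hWD hw⟩
  obtain ⟨w, hw⟩ := hWne
  exact hf.eqOn_zero_of_preconnected_of_eventuallyEq_zero hU (hWU hw)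
    (Filter.eventuallyEq_of_mem (hW.mem_nhds hw) hfW)

end Analytic

theorem MeromOnC.of_analyticOnNhd {n : ℕ} {U : Set (Fin n → ℂ)} {μ : (Fin n → ℂ) → ℂ}
    (hU : IsOpen U) (hμ : AnalyticOnNhd ℂ μ U) : MeromOnC U μ :=
  fun y hy => ⟨U, hU, hy, subset_rfl, μ, 1, hμ, analyticOnNhd_const, ⟨y, hy, one_ne_zero⟩,
    fun _ _ _ => (div_one _).symm⟩

theorem MeromNonzero.of_continuousOn {n : ℕ} {U : Set (Fin n → ℂ)} {μ : (Fin n → ℂ) → ℂ}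
    (hU : IsOpen U) (hμ : ContinuousOn μ U) {y : Fin n → ℂ} (hy : y ∈ U) (hμy : μ y ≠ 0) :
    MeromNonzero U μ :=
  ⟨U ∩ μ ⁻¹' {0}ᶜ, hμ.isOpen_inter_preimage hU isOpen_compl_singleton, ⟨y, hy, hμy⟩,
    Set.inter_subset_left, fun _ hz => hz.2⟩

open Matrix

theorem LinDepMerom.exists_sum_smul_eq_zero {n r : ℕ} {U : Set (Fin n → ℂ)}
    (hU : IsPreconnected U) {h : Fin r → VFa n} (hh : ∀ i, AnalyticOnNhd ℂ (h i) U)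
    (hdep : LinDepMerom U h) {y : Fin n → ℂ} (hy : y ∈ U) :
    ∃ c : Fin r → ℂ, c ≠ 0 ∧ ∑ i, c i • h i y = 0 := by
  obtain ⟨μ, -, ⟨j, W, hWo, hWne, hWU, hμj⟩, D, ⟨-, hUD⟩, hrel⟩ := hdep
  refine (exists_sum_smul_eq_zero_iff_forall_det_submatrix_eq_zero _).mpr fun σ φ => ?_
  have hminor : AnalyticOnNhd ℂ (fun z => ((of fun i => h i z).submatrix σ φ).det) U :=
    AnalyticOnNhd.det fun a b => analyticOnNhd_pi_iff.mp (hh (σ a)) (φ b)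
  refine hminor.eqOn_zero_of_eqOn_zero_inter_dense hU hWo hWne hWU (hWU.trans hUD)
    (fun z ⟨hzW, hzD⟩ => ?_) hy
  exact (exists_sum_smul_eq_zero_iff_forall_det_submatrix_eq_zero _).mp
    ⟨fun i => μ i z, fun h0 => hμj z hzW (congrFun h0 j), hrel z hzD⟩ σ φ

theorem linDepMerom_of_forall_exists_sum_smul_eq_zero {n r : ℕ} {U : Set (Fin n → ℂ)}
    (hUo : IsOpen U) (hUne : U.Nonempty) {h : Fin r → VFa n}
    (hh : ∀ i, AnalyticOnNhd ℂ (h i) U)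
    (hdep : ∀ y ∈ U, ∃ c : Fin r → ℂ, c ≠ 0 ∧ ∑ i, c i • h i y = 0) : LinDepMerom U h := by
  let S := analyticOnNhdSubring ℂ U
  let A : Matrix (Fin r) (Fin n) S :=
    of fun i m => ⟨fun z => h i z m, analyticOnNhd_pi_iff.mp (hh i) m⟩
  have : Nonempty U := hUne.to_subtype
  let restrict : S →+* (U → ℂ) := RingHom.pi fun x => (Pi.evalRingHom _ x.1).comp S.subtype
  obtain ⟨c, hc, hcA⟩ := exists_vecMul_map_eq_zero_of_det_submatrix_map_eq_zero restrict A
    fun σ φ => funext fun x => by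
      change ((A.submatrix σ φ).det : (Fin n → ℂ) → ℂ) x = 0
      rw [Subring.coe_det_apply]
      exact (exists_sum_smul_eq_zero_iff_forall_det_submatrix_eq_zero _).mp (hdep x x.2) σ φ
  obtain ⟨i, x, hx⟩ : ∃ i, ∃ x : U, (c i : (Fin n → ℂ) → ℂ) x ≠ 0 := by
    by_contra! h0
    exact hc (funext fun i => funext (h0 i))
  refine ⟨fun i => c i, fun i => .of_analyticOnNhd hUo (c i).2,
    ⟨i, .of_continuousOn hUo (c i).2.continuousOn x.2 hx⟩, U, ⟨subset_rfl, subset_closure⟩,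
    fun z hz => ?_⟩
  ext m
  simpa [restrict, A, vecMul, dotProduct, Finset.sum_apply] using
    congrFun (congrFun hcA m) ⟨z, hz⟩

/-- Analytic vector fields `h₁,…,h_r` on a nonempty open
connected `U ⊆ ℂⁿ` are linearly dependent over the field of meromorphic
functions on `U` iff their values at every point of `U` are linearly dependent
over ℂ. -/
theorem stmt_0 {n r : ℕ} (U : Set (Fin n → ℂ)) (hUo : IsOpen U)
    (hUc : IsConnected U)
    (h : Fin r → VFa n) (hh : ∀ i, AnalyticOnNhd ℂ (h i) U) :
    LinDepMerom U h ↔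
      ∀ y ∈ U, ∃ c : Fin r → ℂ, c ≠ 0 ∧ (∑ i, c i • h i y) = 0 :=
  ⟨fun hdep _ hy => hdep.exists_sum_smul_eq_zero hUc.isPreconnected hh hy,
    linDepMerom_of_forall_exists_sum_smul_eq_zero hUo hUc.nonempty hh⟩
end

section
/- Let A_s = diag(λ₁,…,λ_n) be a semisimple linear map on ℂⁿ. The dimension over ℂ of the formal centralizer 𝒞^for(A_s) (equivalently of the polynomial centralizer) is infinite if and only if there exist nonnegative integers d₁,…,d_n with Σ d_iλ_i = 0 and Σ d_i > 0; equivalently, if and only if the monomial x₁^{d₁}⋯x_n^{d_n} is a first integral of ẋ = A_s x for some such d; equivalently, if and only if ẋ = A_s x admits a nonconstant formal first integral. -/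
open Finset

/-- Coefficient-wise partial derivative of a multivariate formal power series. -/
noncomputable def psD {n : ℕ} (i : Fin n) (φ : MvPowerSeries (Fin n) ℂ) :
    MvPowerSeries (Fin n) ℂ :=
  fun m => ((m i : ℂ) + 1) * MvPowerSeries.coeff (R := ℂ) (m + Finsupp.single i 1) φ

/-- Formal vector fields on ℂⁿ. -/
abbrev FVF (n : ℕ) := Fin n → MvPowerSeries (Fin n) ℂ

/-- Lie derivative `X_g(φ)`. -/
noncomputable def lieD {n : ℕ} (g : FVF n) (φ : MvPowerSeries (Fin n) ℂ) :
    MvPowerSeries (Fin n) ℂ :=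
  ∑ j, g j * psD j φ

/-- Lie bracket `[g,h] = Dh·g − Dg·h`. -/
noncomputable def fbr {n : ℕ} (g h : FVF n) : FVF n :=
  fun i => lieD g (h i) - lieD h (g i)

/-- The linear vector field `x ↦ Ax`. -/
noncomputable def linVF {n : ℕ} (A : Matrix (Fin n) (Fin n) ℂ) : FVF n :=
  fun i => ∑ j, MvPowerSeries.C (σ := Fin n) (R := ℂ) (A i j) * MvPowerSeries.X j

/-- `f` vanishes at `0` and has linear part `A`. -/
def hasLin {n : ℕ} (f : FVF n) (A : Matrix (Fin n) (Fin n) ℂ) : Prop :=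
  (∀ i, MvPowerSeries.coeff (R := ℂ) 0 (f i) = 0) ∧
  ∀ i j, MvPowerSeries.coeff (R := ℂ) (Finsupp.single j 1) (f i) = A i j

/-- Multiplication of a vector field by a scalar formal power series. -/
noncomputable def psSMul {n : ℕ} (φ : MvPowerSeries (Fin n) ℂ) (f : FVF n) : FVF n :=
  fun i => φ * f i

/-- A formal power series is constant. -/
def constPS {n : ℕ} (φ : MvPowerSeries (Fin n) ℂ) : Prop :=
  ∀ m : Fin n →₀ ℕ, m ≠ 0 → MvPowerSeries.coeff (R := ℂ) m φ = 0

/-- A matrix is diagonalizable (semisimple). -/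
def IsDiagonalizable {n : ℕ} (M : Matrix (Fin n) (Fin n) ℂ) : Prop :=
  ∃ P : Matrix (Fin n) (Fin n) ℂ, IsUnit P ∧ (P⁻¹ * M * P).IsDiag

/-- Dimension of the space of matrices commuting with `A`. -/
noncomputable def matCentDim {n : ℕ} (A : Matrix (Fin n) (Fin n) ℂ) : ℕ :=
  Module.finrank ℂ (Subalgebra.centralizer ℂ ({A} : Set (Matrix (Fin n) (Fin n) ℂ)))

/-- Linear part (as a matrix) of a formal vector field. -/
noncomputable def linPart {n : ℕ} (h : FVF n) : Matrix (Fin n) (Fin n) ℂ :=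
  Matrix.of fun i j => MvPowerSeries.coeff (R := ℂ) (Finsupp.single j 1) (h i)


/-!
Write `⟨m, λ⟩ = ∑ mᵢ λᵢ` (`Finsupp.weight λ m`). The diagonal linear field `X = diag(λ) x` acts
diagonally on monomials: `X(xᵐ) = ⟨m, λ⟩ xᵐ` and `[X, xᵐ eᵢ] = (⟨m, λ⟩ - λᵢ) xᵐ eᵢ`. So a first
integral is supported on resonant exponents `⟨m, λ⟩ = 0`, and a field commuting with `X` on the
pairs `(i, m)` with `⟨m, λ⟩ = λᵢ`. A resonance `d ≠ 0` yields the infinitely many commuting fields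
`x^(k d) xᵢ eᵢ`. Without one, two exponents `m < m'` of equal weight would make `m' - m` a
resonance, so each level set `{m | ⟨m, λ⟩ = λᵢ}` is an antichain of `ℕⁿ`, finite by Dickson's
lemma, and the centralizer embeds into a finite-dimensional space of coefficients.
-/

open MvPowerSeries Finsupp

namespace DiagonalLinearField

section Weight

variable {σ : Type*}

lemma weight_eq_sum_mul [Fintype σ] {R : Type*} [NonAssocSemiring R] (w : σ → R) (m : σ →₀ ℕ) :
    weight w m = ∑ i, (m i : R) * w i := by
  simp only [weight_eq_sum, nsmul_eq_mul]

lemma sum_pos_iff_ne_zero [Fintype σ] (d : σ →₀ ℕ) : 0 < ∑ i, d i ↔ d ≠ 0 := by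
  rw [pos_iff_ne_zero, Ne, Finset.sum_eq_zero_iff, Ne, Finsupp.ext_iff]
  simp

variable {M : Type*} [AddCommMonoid M] [IsRightCancelAdd M] (w : σ → M)

lemma isAntichain_weight_eq (hres : ∀ d : σ →₀ ℕ, d ≠ 0 → weight w d ≠ 0) (c : M) :
    IsAntichain (· ≤ ·) {m : σ →₀ ℕ | weight w m = c} := by
  intro a ha b hb hne hab
  refine hres (b - a) (fun h => hne (le_antisymm hab (tsub_eq_zero_iff_le.mp h))) ?_
  have := map_add (weight w) (b - a) a
  rwa [tsub_add_cancel_of_le hab, hb, ha, eq_comm, add_eq_right] at this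

lemma finite_weight_eq [Finite σ] (hres : ∀ d : σ →₀ ℕ, d ≠ 0 → weight w d ≠ 0) (c : M) :
    {m : σ →₀ ℕ | weight w m = c}.Finite :=
  WellQuasiOrderedLE.finite_of_isAntichain (isAntichain_weight_eq w hres c)

end Weight

variable {n : ℕ} (lam : Fin n → ℂ)

lemma coeff_psD (j : Fin n) (φ : MvPowerSeries (Fin n) ℂ) (m : Fin n →₀ ℕ) :
    coeff m (psD j φ) = ((m j : ℂ) + 1) * coeff (m + single j 1) φ := rfl

lemma psD_C_mul (j : Fin n) (c : ℂ) (φ : MvPowerSeries (Fin n) ℂ) :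
    psD j (C c * φ) = C c * psD j φ := by
  ext m
  simp only [coeff_psD, coeff_C_mul]
  ring

lemma psD_X (i j : Fin n) :
    psD j (X i : MvPowerSeries (Fin n) ℂ) = if j = i then 1 else 0 := by
  classical
  ext m
  rw [coeff_psD, coeff_X]
  by_cases hji : j = i
  · subst hji
    simp only [add_eq_right, if_true, coeff_one]
    split_ifs with hm <;> simp [hm]
  · have hne : m + single j 1 ≠ single i 1 := fun h => by
      simpa [single_eq_of_ne hji] using DFunLike.congr_fun h j
    simp [hne, hji]

lemma coeff_X_mul_psD (j : Fin n) (φ : MvPowerSeries (Fin n) ℂ) (m : Fin n →₀ ℕ) :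
    coeff m (X j * psD j φ) = (m j : ℂ) * coeff m φ := by
  rw [X, coeff_monomial_mul]
  split_ifs with h
  · have hm : 1 ≤ m j := single_le_iff.mp h
    rw [coeff_psD, one_mul, tsub_add_cancel_of_le h, tsub_apply, single_eq_same,
      Nat.cast_sub hm, Nat.cast_one, sub_add_cancel]
  · rw [Nat.eq_zero_of_not_pos (fun hm => h (single_le_iff.mpr hm)), Nat.cast_zero, zero_mul]

lemma linVF_diagonal (i : Fin n) : linVF (Matrix.diagonal lam) i = C (lam i) * X i := by
  rw [linVF, Finset.sum_eq_single_of_mem i (Finset.mem_univ i), Matrix.diagonal_apply_eq]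
  intro j _ hj
  rw [Matrix.diagonal_apply_ne _ hj.symm, map_zero, zero_mul]

lemma coeff_lieD_linVF_diagonal (φ : MvPowerSeries (Fin n) ℂ) (m : Fin n →₀ ℕ) :
    coeff m (lieD (linVF (Matrix.diagonal lam)) φ) = weight lam m * coeff m φ := by
  rw [lieD, map_sum, weight_eq_sum_mul, Finset.sum_mul]
  refine Finset.sum_congr rfl fun j _ => ?_
  rw [linVF_diagonal, mul_assoc, coeff_C_mul, coeff_X_mul_psD]
  ring

lemma lieD_linVF_diagonal_apply (h : FVF n) (i : Fin n) :
    lieD h (linVF (Matrix.diagonal lam) i) = C (lam i) * h i := by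
  rw [lieD, Finset.sum_eq_single_of_mem i (Finset.mem_univ i)]
  · rw [linVF_diagonal, psD_C_mul, psD_X, if_pos rfl, mul_one, mul_comm]
  · intro j _ hj
    rw [linVF_diagonal, psD_C_mul, psD_X, if_neg hj, mul_zero, mul_zero]

lemma coeff_fbr_linVF_diagonal (h : FVF n) (i : Fin n) (m : Fin n →₀ ℕ) :
    coeff m (fbr (linVF (Matrix.diagonal lam)) h i) = (weight lam m - lam i) * coeff m (h i) := by
  rw [fbr, map_sub, coeff_lieD_linVF_diagonal, lieD_linVF_diagonal_apply, coeff_C_mul, sub_mul]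

lemma lieD_linVF_diagonal_eq_zero_iff (φ : MvPowerSeries (Fin n) ℂ) :
    lieD (linVF (Matrix.diagonal lam)) φ = 0 ↔ ∀ m, coeff m φ ≠ 0 → weight lam m = 0 := by
  simp only [MvPowerSeries.ext_iff, coeff_lieD_linVF_diagonal, map_zero, mul_eq_zero]
  exact forall_congr' fun m => or_iff_not_imp_right

def formalCentralizer : Submodule ℂ (FVF n) where
  carrier := {h | ∀ i m, weight lam m ≠ lam i → coeff m (h i) = 0}
  add_mem' ha hb i m hm := by simp [ha i m hm, hb i m hm]
  zero_mem' _ _ _ := by simp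
  smul_mem' c h hh i m hm := by simp [hh i m hm]

lemma fbr_linVF_diagonal_eq_zero_iff (h : FVF n) :
    fbr (linVF (Matrix.diagonal lam)) h = 0 ↔ h ∈ formalCentralizer lam := by
  simp only [funext_iff, MvPowerSeries.ext_iff, coeff_fbr_linVF_diagonal, Pi.zero_apply, map_zero,
    mul_eq_zero, sub_eq_zero]
  exact forall_congr' fun i => ⟨fun H m _ => (H m).resolve_left ‹_›,
    fun H m => or_iff_not_imp_left.mpr (H m)⟩

lemma finiteDimensional_formalCentralizer (hres : ∀ d : Fin n →₀ ℕ, d ≠ 0 → weight lam d ≠ 0) :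
    FiniteDimensional ℂ (formalCentralizer lam) := by
  have := fun i => (finite_weight_eq lam hres (lam i)).to_subtype
  let L : FVF n →ₗ[ℂ] (i : Fin n) → {m | weight lam m = lam i} → ℂ :=
    LinearMap.pi fun i => LinearMap.pi fun m => coeff m.1 ∘ₗ LinearMap.proj i
  refine Module.Finite.of_injective (L ∘ₗ (formalCentralizer lam).subtype)
    ((injective_iff_map_eq_zero _).mpr fun ⟨h, hh⟩ hL => ?_)
  ext i m
  by_cases hm : weight lam m = lam i
  · exact congr_fun (congr_fun hL i) ⟨m, hm⟩
  · exact hh i m hm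

lemma linearIndependent_monomial_one {σ R ι : Type*} [Semiring R] {e : ι → σ →₀ ℕ}
    (he : Function.Injective e) :
    LinearIndependent R fun k => monomial (e k) (1 : R) := by
  classical
  have := (Pi.linearIndependent_single_one (σ →₀ ℕ) R).comp e he
  simp only [monomial_def]
  exact this

lemma exists_linearIndependent_formalCentralizer {d : Fin n →₀ ℕ} (hd : d ≠ 0)
    (hw : weight lam d = 0) :
    ∃ g : ℕ → FVF n, (∀ k, g k ∈ formalCentralizer lam) ∧ LinearIndependent ℂ g := by
  classical
  obtain ⟨i₀, hi₀⟩ : ∃ i, d i ≠ 0 := Finsupp.ne_iff.mp hd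
  -- the fields `x^(k d) · x`
  refine ⟨fun k i => monomial (k • d + single i 1) 1, fun k i m hm => ?_, ?_⟩
  · rw [coeff_monomial, if_neg]
    rintro rfl
    simp [hw, weight_single] at hm
  · refine LinearIndependent.of_comp (LinearMap.proj i₀) (linearIndependent_monomial_one ?_)
    intro k k' h
    simpa [hi₀] using DFunLike.congr_fun h i₀

lemma exists_ne_zero_weight_eq_zero_of_forall_linearIndependent
    (H : ∀ N : ℕ, ∃ g : Fin N → FVF n, (∀ k, g k ∈ formalCentralizer lam) ∧ LinearIndependent ℂ g) :
    ∃ d : Fin n →₀ ℕ, d ≠ 0 ∧ weight lam d = 0 := by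
  by_contra! hres
  have := finiteDimensional_formalCentralizer lam hres
  obtain ⟨g, hg, hli⟩ := H (Module.finrank ℂ (formalCentralizer lam) + 1)
  have hli' : LinearIndependent ℂ fun k => (⟨g k, hg k⟩ : formalCentralizer lam) :=
    hli.of_comp (formalCentralizer lam).subtype
  simpa using hli'.fintype_card_le_finrank

lemma lieD_linVF_diagonal_monomial_eq_zero_iff (d : Fin n →₀ ℕ) :
    lieD (linVF (Matrix.diagonal lam)) (monomial d 1) = 0 ↔ weight lam d = 0 := by
  classical
  simp [lieD_linVF_diagonal_eq_zero_iff, coeff_monomial]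

lemma exists_ne_zero_weight_eq_zero_iff_exists_not_constPS :
    (∃ d : Fin n →₀ ℕ, d ≠ 0 ∧ weight lam d = 0) ↔
      ∃ φ, lieD (linVF (Matrix.diagonal lam)) φ = 0 ∧ ¬ constPS φ := by
  classical
  simp only [constPS, lieD_linVF_diagonal_eq_zero_iff, not_forall]
  constructor
  · rintro ⟨d, hd, hw⟩
    refine ⟨monomial d 1, fun m hm => ?_, d, hd, by simp⟩
    obtain rfl : m = d := by simpa [coeff_monomial] using hm
    exact hw
  · rintro ⟨φ, hφ, m, hm, hcoeff⟩
    exact ⟨m, hm, hφ m hcoeff⟩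

end DiagonalLinearField

open DiagonalLinearField

/-- For `A_s = diag(λ₁,…,λ_n)` the formal centralizer of `A_s`
is infinite dimensional over ℂ iff there is a nontrivial nonnegative integer
relation `⟨d,λ⟩ = 0`; equivalently iff the corresponding monomial is a first
integral of `ẋ = A_s x`; equivalently iff `ẋ = A_s x` admits a nonconstant formal
first integral. -/
theorem stmt_5 {n : ℕ} (lam : Fin n → ℂ) :
    ((∀ N : ℕ, ∃ g : Fin N → FVF n,
        (∀ i, fbr (linVF (Matrix.diagonal lam)) (g i) = 0) ∧ LinearIndependent ℂ g)
      ↔ (∃ d : Fin n →₀ ℕ, (∑ i, (d i : ℂ) * lam i = 0) ∧ 0 < ∑ i, d i)) ∧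
    ((∃ d : Fin n →₀ ℕ, (∑ i, (d i : ℂ) * lam i = 0) ∧ 0 < ∑ i, d i)
      ↔ (∃ d : Fin n →₀ ℕ, 0 < (∑ i, d i) ∧
          lieD (linVF (Matrix.diagonal lam)) (MvPowerSeries.monomial (R := ℂ) d 1) = 0)) ∧
    ((∃ d : Fin n →₀ ℕ, (∑ i, (d i : ℂ) * lam i = 0) ∧ 0 < ∑ i, d i)
      ↔ (∃ φ : MvPowerSeries (Fin n) ℂ,
          lieD (linVF (Matrix.diagonal lam)) φ = 0 ∧ ¬ constPS φ)) := by
  have hres : (∃ d : Fin n →₀ ℕ, (∑ i, (d i : ℂ) * lam i = 0) ∧ 0 < ∑ i, d i) ↔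
      ∃ d : Fin n →₀ ℕ, d ≠ 0 ∧ weight lam d = 0 := by
    simp only [← weight_eq_sum_mul, sum_pos_iff_ne_zero, and_comm]
  rw [hres]
  refine ⟨⟨fun H => ?_, fun ⟨d, hd, hw⟩ N => ?_⟩, ?_,
    exists_ne_zero_weight_eq_zero_iff_exists_not_constPS lam⟩
  · simp only [fbr_linVF_diagonal_eq_zero_iff] at H
    exact exists_ne_zero_weight_eq_zero_of_forall_linearIndependent lam H
  · obtain ⟨g, hg, hli⟩ := exists_linearIndependent_formalCentralizer lam hd hw
    exact ⟨g ∘ Fin.val, fun k => (fbr_linVF_diagonal_eq_zero_iff lam _).mpr (hg k),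
      hli.comp _ Fin.val_injective⟩
  · simp only [sum_pos_iff_ne_zero, lieD_linVF_diagonal_monomial_eq_zero_iff]
end

section
/- Let A_s = diag(λ₁,…,λ_n) be such that the formal centralizer 𝒞^for(A_s) is finite dimensional over ℂ (equivalently, ẋ = A_s x admits no nonconstant formal first integral). Then for any formal vector field f = Ax + ⋯ in Poincaré–Dulac normal form with semisimple linear part A_s, the formal normalizer satisfies 𝒩^for(f) = 𝒞^for(f) + {βf : β ∈ ℂ[[x₁,…,x_n]]}. -/
open Finset

/-!
Every formal first integral of `ẋ = A_s x` is constant, so `⟨m, λ⟩ ≠ 0` for every multi-index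
`m ≠ 0`. As `A_n` is strictly upper triangular, the Lie derivative `X_f` is triangular on
monomials for the weight `∑ (n + i) mᵢ`, with diagonal entries `⟨m, λ⟩`; hence `X_f β = μ - μ(0)`
is solvable for every `μ`. If `[g, f] = μ f`, then `h := g + β f` satisfies `[h, f] = μ(0) f`.
The constant terms give `h(0) = 0` because `A = A_s + A_n` is invertible, and then the linear
terms give `[A, Dh(0)] = μ(0) A`; taking traces, `μ(0) · ∑ λᵢ = 0` with `∑ λᵢ ≠ 0`. Conversely
`[h + β f, f] = -X_f(β) f` whenever `[h, f] = 0`.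
-/

open MvPowerSeries Finsupp
open scoped Matrix

theorem MvPowerSeries.exists_coeff_map_eq_of_triangular {σ K : Type*} [Field K]
    {r : (σ →₀ ℕ) → (σ →₀ ℕ) → Prop} (hr : WellFounded r) (d : (σ →₀ ℕ) → K)
    (L : MvPowerSeries σ K →+ MvPowerSeries σ K)
    (hL : ∀ E m, (∀ m', r m' m → coeff m' E = 0) → coeff m (L E) = d m * coeff m E)
    (φ : MvPowerSeries σ K) :
    ∃ B : MvPowerSeries σ K, ∀ m, d m ≠ 0 → coeff m (L B) = coeff m φ := by
  classical
  -- `coeff m B` is chosen to make `coeff m (L B)` right, given the coefficients of `B` below `m`.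
  let B : MvPowerSeries σ K := hr.fix fun m below =>
    (coeff m φ - coeff m (L fun m' => if h : r m' m then below m' h else 0)) / d m
  let lower (m : σ →₀ ℕ) : MvPowerSeries σ K := fun m' => if r m' m then coeff m' B else 0
  have coeff_lower (m m') : coeff m' (lower m) = if r m' m then coeff m' B else 0 := rfl
  have hB (m) : coeff m B = (coeff m φ - coeff m (L (lower m))) / d m := hr.fix_eq _ m
  refine ⟨B, fun m hm => ?_⟩
  have hdiag : coeff m (L (B - lower m)) = d m * coeff m B := by
    have hm : ¬ r m m := (hr.irrefl).irrefl m
    rw [hL _ m fun m' hm' => ?_]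
    · rw [map_sub, coeff_lower, if_neg hm, sub_zero]
    · rw [map_sub, coeff_lower, if_pos hm', sub_self]
  rw [show B = lower m + (B - lower m) by abel, map_add, map_add, hdiag, hB]
  field_simp
  ring

variable {n : ℕ}

theorem psD_eq_pderiv (i : Fin n) (φ : MvPowerSeries (Fin n) ℂ) : psD i φ = pderiv ℂ i φ := by
  ext m
  rw [coeff_pderiv]
  exact mul_comm _ _

theorem lieD_add_left (g h : FVF n) (φ : MvPowerSeries (Fin n) ℂ) :
    lieD (g + h) φ = lieD g φ + lieD h φ := by
  simp only [lieD, Pi.add_apply, add_mul, Finset.sum_add_distrib]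

theorem lieD_add (g : FVF n) (φ ψ : MvPowerSeries (Fin n) ℂ) :
    lieD g (φ + ψ) = lieD g φ + lieD g ψ := by
  simp only [lieD, psD_eq_pderiv, map_add, mul_add, Finset.sum_add_distrib]

theorem lieD_mul (g : FVF n) (φ ψ : MvPowerSeries (Fin n) ℂ) :
    lieD g (φ * ψ) = φ * lieD g ψ + ψ * lieD g φ := by
  simp only [lieD, psD_eq_pderiv, Derivation.leibniz, smul_eq_mul, Finset.mul_sum,
    ← Finset.sum_add_distrib]
  exact Finset.sum_congr rfl fun _ _ => by ring

theorem lieD_psSMul (β : MvPowerSeries (Fin n) ℂ) (g : FVF n) (φ : MvPowerSeries (Fin n) ℂ) :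
    lieD (psSMul β g) φ = β * lieD g φ := by
  simp only [lieD, psSMul, Finset.mul_sum, mul_assoc]

theorem fbr_add_left (g h f : FVF n) : fbr (g + h) f = fbr g f + fbr h f := by
  funext i
  simp only [fbr, lieD_add_left, Pi.add_apply, lieD_add]
  ring

theorem fbr_psSMul_self (β : MvPowerSeries (Fin n) ℂ) (f : FVF n) :
    fbr (psSMul β f) f = psSMul (-lieD f β) f := by
  funext i
  simp only [fbr, psSMul, lieD_psSMul, lieD_mul]
  ring

theorem coeff_zero_psD (j : Fin n) (φ : MvPowerSeries (Fin n) ℂ) :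
    coeff 0 (psD j φ) = coeff (single j 1) φ := by
  rw [psD_eq_pderiv, coeff_pderiv, zero_add]
  simp

theorem coeff_zero_lieD (g : FVF n) (φ : MvPowerSeries (Fin n) ℂ) :
    coeff 0 (lieD g φ) = ∑ j, coeff 0 (g j) * coeff (single j 1) φ := by
  simp only [lieD, map_sum, coeff_zero_eq_constantCoeff_apply, map_mul]
  simp only [← coeff_zero_eq_constantCoeff_apply, coeff_zero_psD]

theorem coeff_single_one_mul_of_coeff_zero (r : Fin n) {a : MvPowerSeries (Fin n) ℂ}
    (ha : coeff 0 a = 0) (b : MvPowerSeries (Fin n) ℂ) :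
    coeff (single r 1) (a * b) = coeff (single r 1) a * coeff 0 b := by
  classical
  rw [coeff_mul, antidiagonal_single, Finset.sum_map,
    show Finset.HasAntidiagonal.antidiagonal (1 : ℕ) = {(0, 1), (1, 0)} from rfl,
    Finset.sum_insert (by decide), Finset.sum_singleton]
  simp [ha]

theorem coeff_single_one_lieD {g : FVF n} (hg : ∀ j, coeff 0 (g j) = 0)
    (φ : MvPowerSeries (Fin n) ℂ) (r : Fin n) :
    coeff (single r 1) (lieD g φ) = ∑ j, coeff (single r 1) (g j) * coeff (single j 1) φ := by
  simp only [lieD, map_sum, coeff_single_one_mul_of_coeff_zero r (hg _), coeff_zero_psD]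

theorem coeff_zero_fbr {f : FVF n} (hf : ∀ i, coeff 0 (f i) = 0) (g : FVF n) (i : Fin n) :
    coeff 0 (fbr g f i) = (linPart f *ᵥ fun j => coeff 0 (g j)) i := by
  simp only [fbr, map_sub, coeff_zero_lieD, hf, zero_mul, Finset.sum_const_zero, sub_zero,
    Matrix.mulVec, dotProduct, linPart, Matrix.of_apply, mul_comm]

theorem linPart_fbr {g f : FVF n} (hg : ∀ i, coeff 0 (g i) = 0) (hf : ∀ i, coeff 0 (f i) = 0) :
    linPart (fbr g f) = linPart f * linPart g - linPart g * linPart f := by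
  ext i r
  simp [fbr, coeff_single_one_lieD hg, coeff_single_one_lieD hf, linPart, Matrix.mul_apply,
    mul_comm]

theorem eq_zero_of_fbr_eq_psSMul_C {f h : FVF n} {c : ℂ} (hf : ∀ i, coeff 0 (f i) = 0)
    (hdet : (linPart f).det ≠ 0) (htr : (linPart f).trace ≠ 0)
    (hb : fbr h f = psSMul (C c) f) : c = 0 := by
  have hh : ∀ j, coeff 0 (h j) = 0 := by
    have hv : (linPart f *ᵥ fun j => coeff 0 (h j)) = 0 := by
      ext i
      rw [← coeff_zero_fbr hf, hb, psSMul, coeff_C_mul, hf, mul_zero, Pi.zero_apply]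
    exact congrFun (Matrix.eq_zero_of_mulVec_eq_zero hdet hv)
  have hcomm : linPart f * linPart h - linPart h * linPart f = c • linPart f := by
    rw [← linPart_fbr hh hf, hb]
    ext i r
    simp [linPart, psSMul]
  have htrace := congrArg Matrix.trace hcomm
  rw [Matrix.trace_sub, Matrix.trace_mul_comm, sub_self, Matrix.trace_smul, smul_eq_mul] at htrace
  exact (mul_eq_zero.1 htrace.symm).resolve_right htr

theorem linPart_eq_of_hasLin {f : FVF n} {A : Matrix (Fin n) (Fin n) ℂ} (h : hasLin f A) :
    linPart f = A :=
  Matrix.ext h.2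

theorem coeff_X_mul_psD (j : Fin n) (φ : MvPowerSeries (Fin n) ℂ) (m : Fin n →₀ ℕ) :
    coeff m (X j * psD j φ) = m j * coeff m φ := by
  classical
  rw [X_def, coeff_monomial_mul, one_mul]
  by_cases hm : m j = 0
  · rw [if_neg (by rwa [single_le_iff, Nat.one_le_iff_ne_zero, not_not]), hm, Nat.cast_zero,
      zero_mul]
  · rw [if_pos (single_le_iff.2 (Nat.one_le_iff_ne_zero.2 hm)), psD_eq_pderiv, coeff_pderiv,
      sub_add_single_one_cancel hm, tsub_apply, single_eq_same, Nat.cast_sub (by omega)]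
    ring

theorem linVF_diagonal (lam : Fin n → ℂ) (j : Fin n) :
    linVF (Matrix.diagonal lam) j = C (lam j) * X j := by
  rw [linVF, Finset.sum_eq_single j (fun k _ hk => by simp [Matrix.diagonal_apply_ne _ hk.symm])
    (by simp), Matrix.diagonal_apply_eq]

theorem coeff_lieD_linVF_diagonal (lam : Fin n → ℂ) (φ : MvPowerSeries (Fin n) ℂ)
    (m : Fin n →₀ ℕ) :
    coeff m (lieD (linVF (Matrix.diagonal lam)) φ) = weight lam m * coeff m φ := by
  simp only [lieD, linVF_diagonal, map_sum, mul_assoc, coeff_C_mul, coeff_X_mul_psD,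
    weight_eq_sum, nsmul_eq_mul, Finset.sum_mul]
  exact Finset.sum_congr rfl fun _ _ => by ring

theorem weight_ne_zero_of_forall_constPS {lam : Fin n → ℂ}
    (hfin : ∀ φ : MvPowerSeries (Fin n) ℂ, lieD (linVF (Matrix.diagonal lam)) φ = 0 → constPS φ)
    {m : Fin n →₀ ℕ} (hm : m ≠ 0) : weight lam m ≠ 0 := by
  intro hres
  have hfirst : lieD (linVF (Matrix.diagonal lam)) (monomial m 1) = 0 := by
    ext m'
    rw [coeff_lieD_linVF_diagonal, coeff_monomial, map_zero]
    split_ifs with h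
    · rw [h, hres, zero_mul]
    · rw [mul_zero]
  simpa using hfin _ hfirst m hm

/-- Weights `n + i` make every monomial of degree `≥ 2` heavier than every variable, and order
the variables increasingly. -/
def triWeight (n : ℕ) : Fin n → ℕ := fun i => n + i

theorem weight_triWeight_single (i : Fin n) : weight (triWeight n) (single i 1) = n + i := by
  rw [weight_single, one_smul, triWeight]

theorem mul_degree_le_weight_triWeight (k : Fin n →₀ ℕ) :
    n * degree k ≤ weight (triWeight n) k := by
  rw [weight_eq_sum, degree_eq_sum, Finset.mul_sum]
  exact Finset.sum_le_sum fun i _ => by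
    rw [smul_eq_mul, triWeight, mul_add, mul_comm]
    exact Nat.le_add_right _ _

section Triangular

variable {lam : Fin n → ℂ} {An : Matrix (Fin n) (Fin n) ℂ} {f : FVF n}

theorem coeff_eq_zero_of_weight_le (hupper : ∀ i j : Fin n, j ≤ i → An i j = 0)
    (hlin : hasLin f (Matrix.diagonal lam + An)) {j : Fin n} {k : Fin n →₀ ℕ}
    (hk : k ≠ single j 1) (hw : weight (triWeight n) k ≤ n + j) : coeff k (f j) = 0 := by
  obtain hdeg | hdeg | hdeg : degree k = 0 ∨ degree k = 1 ∨ 2 ≤ degree k := by omega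
  · rw [(degree_eq_zero_iff k).1 hdeg]
    exact hlin.1 j
  · obtain ⟨r, rfl⟩ : k ∈ Set.range fun r => single r 1 := range_single_one ▸ hdeg
    have hrj : r ≠ j := fun h => hk (h ▸ rfl)
    rw [weight_triWeight_single] at hw
    rw [hlin.2, Matrix.add_apply, Matrix.diagonal_apply_ne _ hrj.symm, hupper j r (by omega),
      add_zero]
  · have := mul_degree_le_weight_triWeight k
    have : n * 2 ≤ n * degree k := Nat.mul_le_mul_left n hdeg
    omega

theorem coeff_lieD_eq_of_coeff_eq_zero (hupper : ∀ i j : Fin n, j ≤ i → An i j = 0)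
    (hlin : hasLin f (Matrix.diagonal lam + An)) (E : MvPowerSeries (Fin n) ℂ) (m : Fin n →₀ ℕ)
    (hE : ∀ m', weight (triWeight n) m' < weight (triWeight n) m → coeff m' E = 0) :
    coeff m (lieD f E) = coeff m (lieD (linVF (Matrix.diagonal lam)) E) := by
  classical
  simp only [lieD, map_sum, linVF_diagonal]
  refine Finset.sum_congr rfl fun j _ => ?_
  rw [coeff_mul m (f j), coeff_mul m (C (lam j) * X j)]
  refine Finset.sum_congr rfl fun ⟨k, l⟩ hkl => ?_
  rw [Finset.HasAntidiagonal.mem_antidiagonal] at hkl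
  dsimp only at hkl ⊢
  by_cases hk : k = single j 1
  · subst hk
    rw [hlin.2, Matrix.add_apply, Matrix.diagonal_apply_eq, hupper j j le_rfl, add_zero,
      coeff_C_mul, coeff_X, if_pos rfl, mul_one]
  · rw [coeff_C_mul, coeff_X, if_neg hk, mul_zero, zero_mul]
    by_cases hw : weight (triWeight n) k ≤ n + j
    · rw [coeff_eq_zero_of_weight_le hupper hlin hk hw, zero_mul]
    · rw [psD_eq_pderiv, coeff_pderiv, hE, zero_mul, mul_zero]
      rw [← hkl, map_add, map_add, weight_triWeight_single]
      omega

theorem exists_lieD_eq_sub_C (hres : ∀ m : Fin n →₀ ℕ, m ≠ 0 → weight lam m ≠ 0)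
    (hupper : ∀ i j : Fin n, j ≤ i → An i j = 0) (hlin : hasLin f (Matrix.diagonal lam + An))
    (φ : MvPowerSeries (Fin n) ℂ) : ∃ β, lieD f β = φ - C (coeff 0 φ) := by
  obtain ⟨β, hβ⟩ := exists_coeff_map_eq_of_triangular
    (InvImage.wf (weight (triWeight n)) wellFounded_lt) (weight lam)
    (AddMonoidHom.mk' (lieD f) (lieD_add f))
    (fun E m hE => (coeff_lieD_eq_of_coeff_eq_zero hupper hlin E m hE).trans
      (coeff_lieD_linVF_diagonal lam E m)) φ
  refine ⟨β, ext fun m => ?_⟩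
  rcases eq_or_ne m 0 with rfl | hm
  · simp [coeff_zero_lieD, hlin.1]
  · rw [map_sub, coeff_C, if_neg hm, sub_zero]
    exact hβ m (hres m hm)

theorem det_diagonal_add_of_upper (hupper : ∀ i j : Fin n, j ≤ i → An i j = 0) :
    (Matrix.diagonal lam + An).det = ∏ i, lam i := by
  rw [Matrix.det_of_isUpperTriangular fun i j (hji : j < i) => by
    rw [Matrix.add_apply, Matrix.diagonal_apply_ne _ hji.ne', hupper i j hji.le, add_zero]]
  simp [hupper _ _ le_rfl]

theorem trace_diagonal_add_of_upper (hupper : ∀ i j : Fin n, j ≤ i → An i j = 0) :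
    (Matrix.diagonal lam + An).trace = ∑ i, lam i := by
  simp [Matrix.trace, hupper _ _ le_rfl]

theorem fbr_eq_zero_of_fbr_eq_psSMul_C (hres : ∀ m : Fin n →₀ ℕ, m ≠ 0 → weight lam m ≠ 0)
    (hupper : ∀ i j : Fin n, j ≤ i → An i j = 0) (hlin : hasLin f (Matrix.diagonal lam + An))
    {h : FVF n} {c : ℂ} (hb : fbr h f = psSMul (C c) f) : fbr h f = 0 := by
  rcases n.eq_zero_or_pos with rfl | hn
  · exact Subsingleton.elim _ _
  have hdet : (linPart f).det ≠ 0 := by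
    rw [linPart_eq_of_hasLin hlin, det_diagonal_add_of_upper hupper]
    exact Finset.prod_ne_zero_iff.2 fun i _ => by
      simpa [weight_single] using hres (single i 1) (single_ne_zero.2 one_ne_zero)
  have htr : (linPart f).trace ≠ 0 := by
    rw [linPart_eq_of_hasLin hlin, trace_diagonal_add_of_upper hupper]
    simpa [weight_eq_sum] using hres (equivFunOnFinite.symm 1)
      (ne_of_apply_ne (· ⟨0, hn⟩) (by simp))
  rw [hb, eq_zero_of_fbr_eq_psSMul_C hlin.1 hdet htr hb, map_zero]
  funext i
  exact zero_mul _

end Triangular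

theorem stmt_6_general {n : ℕ} (lam : Fin n → ℂ) (An : Matrix (Fin n) (Fin n) ℂ)
    (hupper : ∀ i j : Fin n, j ≤ i → An i j = 0)
    (hfin : ∀ φ : MvPowerSeries (Fin n) ℂ,
      lieD (linVF (Matrix.diagonal lam)) φ = 0 → constPS φ)
    (f : FVF n) (hlin : hasLin f (Matrix.diagonal lam + An)) :
    ∀ g : FVF n,
      (∃ lam' : MvPowerSeries (Fin n) ℂ, fbr g f = psSMul lam' f) ↔
      (∃ (h : FVF n) (β : MvPowerSeries (Fin n) ℂ),
        fbr h f = 0 ∧ g = h + psSMul β f) := by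
  have hres (m : Fin n →₀ ℕ) (hm : m ≠ 0) := weight_ne_zero_of_forall_constPS hfin hm
  intro g
  constructor
  · rintro ⟨μ, hg⟩
    obtain ⟨β, hβ⟩ := exists_lieD_eq_sub_C hres hupper hlin μ
    have hC : fbr (g + psSMul β f) f = psSMul (C (coeff 0 μ)) f := by
      rw [fbr_add_left, hg, fbr_psSMul_self, hβ]
      funext i
      simp only [Pi.add_apply, psSMul]
      ring
    refine ⟨g + psSMul β f, -β, fbr_eq_zero_of_fbr_eq_psSMul_C hres hupper hlin hC, ?_⟩
    funext i
    simp only [Pi.add_apply, psSMul]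
    ring
  · rintro ⟨h, β, hh, rfl⟩
    exact ⟨-lieD f β, by rw [fbr_add_left, hh, fbr_psSMul_self, zero_add]⟩

/-- If the formal centralizer of `A_s = diag(λ)` is finite
dimensional (equivalently, `ẋ = A_s x` has no nonconstant formal first integral),
then for any `f = Ax + ⋯` in Poincaré–Dulac normal form with semisimple linear
part `A_s` one has `𝒩^for(f) = 𝒞^for(f) + {βf : β ∈ ℂ[[x]]}`. -/
theorem stmt_6 {n : ℕ} (lam : Fin n → ℂ) (An : Matrix (Fin n) (Fin n) ℂ)
    (hupper : ∀ i j : Fin n, j ≤ i → An i j = 0)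
    (hcomm : Matrix.diagonal lam * An = An * Matrix.diagonal lam)
    (hfin : ∀ φ : MvPowerSeries (Fin n) ℂ,
      lieD (linVF (Matrix.diagonal lam)) φ = 0 → constPS φ)
    (f : FVF n) (hlin : hasLin f (Matrix.diagonal lam + An))
    (hPDNF : fbr (linVF (Matrix.diagonal lam)) f = 0) :
    ∀ g : FVF n,
      (∃ lam' : MvPowerSeries (Fin n) ℂ, fbr g f = psSMul lam' f) ↔
      (∃ (h : FVF n) (β : MvPowerSeries (Fin n) ℂ),
        fbr h f = 0 ∧ g = h + psSMul β f) :=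
  stmt_6_general lam An hupper hfin f hlin
end

section
/- Let B = diag(μ₁,…,μ_n) with all μ_i ≠ 0, and assume that every resonance relation ⟨m,μ⟩ − μ_j = 0 with m ∈ ℤ_{≥0}ⁿ implies m_j > 0, for each j = 1,…,n. Then the module 𝒞^pol(B) of polynomial vector fields commuting with B is a free module of rank n over the algebra I(B) of polynomial first integrals of B, generated by the vector fields Q_j(x) = x_je_j, 1 ≤ j ≤ n. -/
/-!
The derivation `X_B` of `B = diag(μ)` acts diagonally on monomials: `X_B(x^m) = ⟨m,μ⟩ x^m`.
A field `g` commutes with `B` iff `X_B(g_i) = μ_i g_i` for every `i`, so every monomial `x^m` of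
`g_i` is resonant, `⟨m,μ⟩ = μ_i`; by hypothesis `m_i > 0`, hence `g_i = φ_i x_i`, and the Leibniz
rule turns `X_B(x_i φ_i) = μ_i x_i φ_i` into `X_B(φ_i) = 0`. Freeness holds because `x_i` is not a
zero divisor.
-/

open Finset

/-- Polynomial vector fields on ℂⁿ. -/
abbrev PVF (n : ℕ) := Fin n → MvPolynomial (Fin n) ℂ

/-- Lie derivative `X_g(φ) = Dφ·g`. -/
noncomputable def lieDP {n : ℕ} (g : PVF n) (φ : MvPolynomial (Fin n) ℂ) :
    MvPolynomial (Fin n) ℂ :=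
  ∑ j, g j * MvPolynomial.pderiv j φ

/-- Lie bracket `[g,h] = Dh·g − Dg·h`. -/
noncomputable def pbr {n : ℕ} (g h : PVF n) : PVF n :=
  fun i => lieDP g (h i) - lieDP h (g i)

/-- The linear vector field `x ↦ Bx`. -/
noncomputable def linVFP {n : ℕ} (B : Matrix (Fin n) (Fin n) ℂ) : PVF n :=
  fun i => ∑ j, MvPolynomial.C (B i j) * MvPolynomial.X j

/-- The vector field `Q_j(x) = x_j e_j`. -/
noncomputable def Qvf {n : ℕ} (j : Fin n) : PVF n :=
  fun i => if i = j then MvPolynomial.X j else 0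

open MvPolynomial

theorem MvPolynomial.coeff_X_mul_pderiv {R σ : Type*} [CommSemiring R] (i : σ)
    (φ : MvPolynomial σ R) (m : σ →₀ ℕ) :
    coeff m (X i * pderiv i φ) = (m i : R) * coeff m φ := by
  classical
  induction φ using MvPolynomial.induction_on' with
  | monomial m' c =>
    rw [X_mul_pderiv_monomial, coeff_smul, coeff_monomial, nsmul_eq_mul]
    split_ifs with h
    · rw [h]
    · rw [mul_zero, mul_zero]
  | add p q hp hq => rw [map_add, mul_add, coeff_add, coeff_add, hp, hq, mul_add]

section LieDerivative

variable {n : ℕ}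

theorem lieDP_smul (g : PVF n) (a : ℂ) (φ : MvPolynomial (Fin n) ℂ) :
    lieDP g (a • φ) = a • lieDP g φ := by
  simp only [lieDP, (pderiv _).map_smul, mul_smul_comm, smul_sum]

theorem lieDP_mul (g : PVF n) (φ ψ : MvPolynomial (Fin n) ℂ) :
    lieDP g (φ * ψ) = φ * lieDP g ψ + ψ * lieDP g φ := by
  simp only [lieDP, mul_sum, ← sum_add_distrib, Derivation.leibniz, smul_eq_mul]
  exact sum_congr rfl fun _ _ => by ring

theorem lieDP_X (g : PVF n) (i : Fin n) : lieDP g (X i) = g i := by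
  classical
  simp [lieDP, pderiv_X, Pi.single_apply]

theorem linVFP_diagonal_apply (μ : Fin n → ℂ) (i : Fin n) :
    linVFP (Matrix.diagonal μ) i = μ i • X i := by
  simp [linVFP, Matrix.diagonal_apply, smul_eq_C_mul, apply_ite C, ite_mul]

theorem coeff_lieDP_linVFP_diagonal (μ : Fin n → ℂ) (φ : MvPolynomial (Fin n) ℂ)
    (m : Fin n →₀ ℕ) :
    coeff m (lieDP (linVFP (Matrix.diagonal μ)) φ) = (∑ i, (m i : ℂ) * μ i) * coeff m φ := by
  simp only [lieDP, linVFP_diagonal_apply, coeff_sum, smul_mul_assoc, coeff_smul,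
    coeff_X_mul_pderiv, smul_eq_mul, sum_mul]
  exact sum_congr rfl fun _ _ => by ring

theorem pbr_linVFP_diagonal_eq_zero_iff (μ : Fin n → ℂ) (g : PVF n) :
    pbr (linVFP (Matrix.diagonal μ)) g = 0 ↔
      ∀ i, lieDP (linVFP (Matrix.diagonal μ)) (g i) = μ i • g i := by
  simp only [funext_iff, pbr, linVFP_diagonal_apply, lieDP_smul, lieDP_X, Pi.zero_apply,
    sub_eq_zero]

theorem pbr_linVFP_diagonal_Qvf (μ : Fin n → ℂ) (j : Fin n) :
    pbr (linVFP (Matrix.diagonal μ)) (Qvf j) = 0 := by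
  refine (pbr_linVFP_diagonal_eq_zero_iff μ _).2 fun i => ?_
  by_cases h : i = j
  · subst h
    simp [Qvf, lieDP_X, linVFP_diagonal_apply]
  · simp [Qvf, h, lieDP]

theorem weight_eq_of_lieDP_eq_smul {μ : Fin n → ℂ} {φ : MvPolynomial (Fin n) ℂ} {c : ℂ}
    (h : lieDP (linVFP (Matrix.diagonal μ)) φ = c • φ) {m : Fin n →₀ ℕ} (hm : coeff m φ ≠ 0) :
    ∑ i, (m i : ℂ) * μ i = c := by
  have hcoeff := congrArg (coeff m) h
  rw [coeff_lieDP_linVFP_diagonal, coeff_smul, smul_eq_mul] at hcoeff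
  exact mul_right_cancel₀ hm hcoeff

theorem X_dvd_of_lieDP_eq_smul {μ : Fin n → ℂ} {i : Fin n}
    (hres : ∀ m : Fin n → ℕ, ∑ k, (m k : ℂ) * μ k = μ i → 0 < m i)
    {φ : MvPolynomial (Fin n) ℂ} (h : lieDP (linVFP (Matrix.diagonal μ)) φ = μ i • φ) :
    X i ∣ φ := by
  rw [← support_sum_monomial_coeff φ]
  exact dvd_sum fun m hm =>
    X_dvd_monomial.2 (Or.inr (hres m (weight_eq_of_lieDP_eq_smul h (mem_support_iff.1 hm))).ne')

theorem lieDP_eq_zero_of_lieDP_X_mul {μ : Fin n → ℂ} {i : Fin n} {ψ : MvPolynomial (Fin n) ℂ}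
    (h : lieDP (linVFP (Matrix.diagonal μ)) (X i * ψ) = μ i • (X i * ψ)) :
    lieDP (linVFP (Matrix.diagonal μ)) ψ = 0 := by
  rw [lieDP_mul, lieDP_X, linVFP_diagonal_apply] at h
  have hX : X i * lieDP (linVFP (Matrix.diagonal μ)) ψ = 0 := by
    simp only [smul_eq_C_mul] at h
    linear_combination h
  exact (mul_eq_zero.1 hX).resolve_left (X_ne_zero i)

end LieDerivative

theorem stmt_12_general {n : ℕ} (μ : Fin n → ℂ)
    (hres : ∀ (m : Fin n → ℕ) (j : Fin n),
      (∑ i, (m i : ℂ) * μ i) = μ j → 0 < m j) :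
    -- each generator Q_j lies in 𝒞^pol(B) :
    (∀ j, pbr (linVFP (Matrix.diagonal μ)) (Qvf j) = 0) ∧
    -- the Q_j generate 𝒞^pol(B) over I(B) :
    (∀ g : PVF n, pbr (linVFP (Matrix.diagonal μ)) g = 0 →
      ∃ φ : Fin n → MvPolynomial (Fin n) ℂ,
        (∀ j, lieDP (linVFP (Matrix.diagonal μ)) (φ j) = 0) ∧
        ∀ i, g i = φ i * MvPolynomial.X i) ∧
    -- the Q_j are free over I(B) :
    (∀ φ : Fin n → MvPolynomial (Fin n) ℂ,
      (∀ j, lieDP (linVFP (Matrix.diagonal μ)) (φ j) = 0) →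
      (∀ i, φ i * MvPolynomial.X i = 0) → ∀ i, φ i = 0) := by
  refine ⟨pbr_linVFP_diagonal_Qvf μ, fun g hg => ?_, fun φ _ hφ i =>
    (mul_eq_zero.1 (hφ i)).resolve_right (X_ne_zero i)⟩
  have heigen := (pbr_linVFP_diagonal_eq_zero_iff μ g).1 hg
  choose φ hφ using fun i => X_dvd_of_lieDP_eq_smul (hres · i) (heigen i)
  refine ⟨φ, fun i => lieDP_eq_zero_of_lieDP_X_mul (i := i) ?_,
    fun i => (hφ i).trans (mul_comm _ _)⟩
  rw [← hφ i]
  exact heigen i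

/-- If `B = diag(μ₁,…,μ_n)` with all `μ_i ≠ 0` and every
resonance `⟨m,μ⟩ = μ_j` implies `m_j > 0`, then the module `𝒞^pol(B)` of
polynomial vector fields commuting with `B` is a free module of rank `n` over
the algebra `I(B)` of polynomial first integrals, generated by
`Q_j(x) = x_j e_j`. -/
theorem stmt_12 {n : ℕ} (μ : Fin n → ℂ) (hμ : ∀ i, μ i ≠ 0)
    (hres : ∀ (m : Fin n → ℕ) (j : Fin n),
      (∑ i, (m i : ℂ) * μ i) = μ j → 0 < m j) :
    -- each generator Q_j lies in 𝒞^pol(B) :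
    (∀ j, pbr (linVFP (Matrix.diagonal μ)) (Qvf j) = 0) ∧
    -- the Q_j generate 𝒞^pol(B) over I(B) :
    (∀ g : PVF n, pbr (linVFP (Matrix.diagonal μ)) g = 0 →
      ∃ φ : Fin n → MvPolynomial (Fin n) ℂ,
        (∀ j, lieDP (linVFP (Matrix.diagonal μ)) (φ j) = 0) ∧
        ∀ i, g i = φ i * MvPolynomial.X i) ∧
    -- the Q_j are free over I(B) :
    (∀ φ : Fin n → MvPolynomial (Fin n) ℂ,
      (∀ j, lieDP (linVFP (Matrix.diagonal μ)) (φ j) = 0) →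
      (∀ i, φ i * MvPolynomial.X i = 0) → ∀ i, φ i = 0) :=
  stmt_12_general μ hres
end
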